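/- arXiv:2410.05009 — 2 statements merged into one kernel-verified Lean document; each statement's English description precedes it below -/
import Mathlib

section
/- Let ψ : ℝ × (0,∞) → ℝ be defined by ψ(η₁,η₂) = ½η₁² + ¼ η₂ ln η₂. Then the matrix of second partial derivatives of ψ at (η₁,η₂) is diag(1, 1/(4η₂)), and for all x ∈ ℝ and y > 0, with J(x,y) = diag(1, 2y) the Jacobian matrix of the map (x,y) ↦ (x, y²), one has J(x,y)ᵀ · Hess ψ(x, y²) · J(x,y) equal to the 2×2 identity matrix; i.e. (x, y²) are Hessian coordinates for the Euclidean plane with Hessian potential ψ. (This is the second Smorodinski–Winternitz system (ii).) -/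
open Real Set Matrix

/-! ψ separates as `g(η₁) + h(η₂)`, so its Hessian is `diag(g'', h'') = diag(1, 1/(4η₂))`.
Conjugating by `J = diag(1, 2y)` scales the second entry by `4y²`, and at `η₂ = y²` this
gives `1`. -/

/-- The Hessian potential of the second Smorodinski–Winternitz system (ii)
in its Hessian coordinates. -/
noncomputable def ψ (a b : ℝ) : ℝ := a ^ 2 / 2 + b * log b / 4

/-- Partial derivative with respect to the first variable. -/
noncomputable def d1 (f : ℝ → ℝ → ℝ) (a b : ℝ) : ℝ := deriv (fun s => f s b) a

/-- Partial derivative with respect to the second variable. -/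
noncomputable def d2 (f : ℝ → ℝ → ℝ) (a b : ℝ) : ℝ := deriv (fun t => f a t) b

/-- The matrix of second partial derivatives of a function of two variables. -/
noncomputable def Hess (f : ℝ → ℝ → ℝ) (a b : ℝ) : Matrix (Fin 2) (Fin 2) ℝ :=
  !![d1 (d1 f) a b, d1 (d2 f) a b;
     d2 (d1 f) a b, d2 (d2 f) a b]

/-- The Jacobian matrix of the coordinate change `(x,y) ↦ (x, y²)`. -/
noncomputable def J (x y : ℝ) : Matrix (Fin 2) (Fin 2) ℝ := !![1, 0; 0, 2 * y]

-- No differentiability is needed: `deriv` ignores additive constants even where `g` or `h`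
-- is not differentiable.
theorem Hess_add_separable (g h : ℝ → ℝ) (a b : ℝ) :
    Hess (fun s t => g s + h t) a b = !![deriv (deriv g) a, 0; 0, deriv (deriv h) b] := by
  have hd1 : d1 (fun s t => g s + h t) = fun s _ => deriv g s := by
    ext s t
    exact deriv_add_const (h t)
  have hd2 : d2 (fun s t => g s + h t) = fun _ t => deriv h t := by
    ext s t
    exact deriv_const_add (g s)
  rw [Hess, hd1, hd2]
  simp only [d1, d2, deriv_const]

theorem deriv_deriv_half_sq (a : ℝ) : deriv (deriv fun s : ℝ => s ^ 2 / 2) a = 1 := by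
  have hderiv : deriv (fun s : ℝ => s ^ 2 / 2) = id := by
    ext s
    simp
  simp [hderiv]

-- Valid for every `b` thanks to Mathlib's conventions `log b = log |b|` and `0⁻¹ = 0`.
theorem deriv_deriv_mul_log_div_four (b : ℝ) :
    deriv (deriv fun t => t * log t / 4) b = 1 / (4 * b) := by
  have hderiv : deriv (fun t => t * log t / 4) = fun t => deriv (fun t => t * log t) t / 4 := by
    ext t
    exact deriv_div_const 4
  have hderiv2 : deriv (deriv fun t => t * log t) = deriv^[2] fun t => t * log t := rfl
  rw [hderiv, deriv_div_const, hderiv2, deriv2_mul_log]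
  ring

theorem J_isSymm (x y : ℝ) : (J x y).IsSymm := by
  ext i j
  fin_cases i <;> fin_cases j <;> rfl

theorem J_transpose_mul_diagonal_mul_J (x y p q : ℝ) :
    (J x y)ᵀ * !![p, 0; 0, q] * J x y = !![p, 0; 0, 4 * y ^ 2 * q] := by
  rw [(J_isSymm x y).eq, _root_.J, mul_fin_two, mul_fin_two]
  simp only [mul_one, mul_zero, zero_mul, add_zero, zero_add]
  ring_nf

theorem Hess_ψ (a b : ℝ) : Hess ψ a b = !![1, 0; 0, 1 / (4 * b)] := by
  rw [show ψ = fun s t => s ^ 2 / 2 + t * log t / 4 from rfl, Hess_add_separable,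
    deriv_deriv_half_sq, deriv_deriv_mul_log_div_four]

/-- For `ψ(η₁,η₂) = ½η₁² + ¼η₂ ln η₂`, the matrix of second partial derivatives
is `diag(1, 1/(4η₂))`, and `(x, y²)` are Hessian coordinates for the Euclidean
plane with Hessian potential `ψ`: `J(x,y)ᵀ · Hess ψ(x,y²) · J(x,y) = I₂`. -/
theorem sw_ii_hessian_coordinates :
    (∀ a b : ℝ, 0 < b → Hess ψ a b = !![1, 0; 0, 1 / (4 * b)]) ∧
    ∀ x y : ℝ, 0 < y →
      (J x y)ᵀ * Hess ψ x (y ^ 2) * J x y = 1 := by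
  refine ⟨fun a b _ => Hess_ψ a b, fun x y hy => ?_⟩
  rw [Hess_ψ, J_transpose_mul_diagonal_mul_J, one_fin_two]
  congr
  field_simp
end

section
/- There exist no real constants c₀, c₁, c₂ such that −¼ ln(1 − η₁ − η₂) = ¼(η₁ ln η₁ + η₂ ln η₂ + (1 − η₁ − η₂) ln(1 − η₁ − η₂)) + c₁η₁ + c₂η₂ + c₀ holds for all (η₁,η₂) in the open simplex {η₁ > 0, η₂ > 0, η₁ + η₂ < 1}. (Hence the Hessian structure associated with the generic system (s2) on the round 2-sphere is not self-dual.) -/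
/-!
Along a line `η₁ + η₂ = s` the dual potential `−¼ ln(1 − s)` is constant, while the potential
contains `¼(η₁ ln η₁ + η₂ ln η₂)`, which is strictly convex there. An affine function has vanishing
second differences, so comparing the points `(x, y)`, `(y, x)` and their midpoint rules out the
identity.
-/

open Real

lemma two_mul_mul_log_midpoint_lt {x y : ℝ} (hx : 0 ≤ x) (hy : 0 ≤ y) (hxy : x ≠ y) :
    2 * ((x + y) / 2 * log ((x + y) / 2)) < x * log x + y * log y := by
  have := strictConvexOn_mul_log.2 (Set.mem_Ici.2 hx) (Set.mem_Ici.2 hy) hxy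
    (by norm_num : (0 : ℝ) < 1 / 2) (by norm_num : (0 : ℝ) < 1 / 2) (by norm_num)
  simp only [smul_eq_mul] at this
  rw [show 1 / 2 * x + 1 / 2 * y = (x + y) / 2 by ring] at this
  linarith

theorem not_exists_eq_entropy_potential_add_affine (g : ℝ → ℝ) :
    ¬ ∃ c₀ c₁ c₂ : ℝ, ∀ a b : ℝ, 0 < a → 0 < b → a + b < 1 →
      g (1 - a - b) =
        (a * log a + b * log b + (1 - a - b) * log (1 - a - b)) / 4
          + c₁ * a + c₂ * b + c₀ := by
  rintro ⟨c₀, c₁, c₂, h⟩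
  set m : ℝ := (1 / 4 + 1 / 2) / 2
  have hxy := h (1 / 4) (1 / 2) (by norm_num) (by norm_num) (by norm_num)
  have hyx := h (1 / 2) (1 / 4) (by norm_num) (by norm_num) (by norm_num)
  have hmm := h m m (by norm_num) (by norm_num) (by norm_num)
  rw [show (1 : ℝ) - 1 / 2 - 1 / 4 = 1 - 1 / 4 - 1 / 2 by norm_num] at hyx
  rw [show 1 - m - m = 1 - 1 / 4 - 1 / 2 by norm_num] at hmm
  have hconvex := two_mul_mul_log_midpoint_lt (x := 1 / 4) (y := 1 / 2) (by norm_num) (by norm_num)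
    (by norm_num)
  linarith

/-- The Hessian structure of the generic system (s2) on the round 2-sphere is
not self-dual: on the open simplex, the dual Hessian potential
`−¼ ln(1 − η₁ − η₂)` does not coincide with the Hessian potential
`¼(η₁ ln η₁ + η₂ ln η₂ + (1 − η₁ − η₂) ln(1 − η₁ − η₂))` up to terms affine in
the Hessian coordinates. -/
theorem s2_not_self_dual :
    ¬ ∃ c₀ c₁ c₂ : ℝ, ∀ a b : ℝ, 0 < a → 0 < b → a + b < 1 →
      -(1 / 4) * log (1 - a - b) =
        (a * log a + b * log b + (1 - a - b) * log (1 - a - b)) / 4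
          + c₁ * a + c₂ * b + c₀ :=
  not_exists_eq_entropy_potential_add_affine fun s => -(1 / 4) * log s
end
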